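/- arXiv:1606.02592 — 2 statements merged into one kernel-verified Lean document; each statement's English description precedes it below -/
import Mathlib

section
/- Let m ≥ 1 and let M_1, …, M_m be invertible real N×N matrices. Suppose the full cyclic product M^{(1)} is diagonalizable over ℂ and has an algebraically simple complex eigenvalue λ_c with |λ_c| ≠ 1 and |μ| < |λ_c| for every other complex eigenvalue μ. For j ∈ {1,…,m} and S < 0 define 𝒰_S^{(j)} := { y ∈ ℝ^N : for every l ∈ {1,…,m} and every integer k ≥ 0 all components of M_{(l,j)} (M^{(j)})^k y are < S, and for every l ∈ {1,…,m} and every coordinate i the i-th component of M_{(l,j)} (M^{(j)})^k y tends to -∞ as k → ∞ }. If ℓ(U^{-∞}(M^{(j₀)})) = 0 for some j₀ ∈ {1,…,m}, then ℓ(𝒰_S^{(j)}) = 0 for every j ∈ {1,…,m} and every S < 0. -/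
/-!
If `l` is the cyclic predecessor of `j₀`, the partial-turn matrix `A = M_{(l,j)}` carries a
point from section `j` to section `j₀`, so it intertwines the return maps:
`(M^{(j₀)})^k A = A (M^{(j)})^k`. Hence `A` maps `𝒰_S^{(j)}` into `U^{-∞}(M^{(j₀)})`, and since
`A` is invertible, the preimage of a Lebesgue-null set under it is null.
-/

open Matrix MeasureTheory Filter Set

noncomputable section

/-- `U^{-∞}(M)`: points of the open negative orthant all of whose iterates under `M`
tend to `-∞` in every coordinate. -/
def UnegInf {N : ℕ} (M : Matrix (Fin N) (Fin N) ℝ) : Set (Fin N → ℝ) :=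
  {y | (∀ i, y i < 0) ∧ ∀ i, Tendsto (fun k : ℕ => ((M ^ k) *ᵥ y) i) atTop atBot}

/-- `μ ∈ ℂ` is an eigenvalue of the real matrix `M` regarded as a complex matrix. -/
def IsCEigenvalue {N : ℕ} (M : Matrix (Fin N) (Fin N) ℝ) (μ : ℂ) : Prop :=
  ∃ v : Fin N → ℂ, v ≠ 0 ∧ (M.map Complex.ofReal) *ᵥ v = μ • v

/-- `M` is diagonalizable over `ℂ`: `ℂ^N` has a basis of eigenvectors of `M`. -/
def DiagonalizableOverC {N : ℕ} (M : Matrix (Fin N) (Fin N) ℝ) : Prop :=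
  ∃ b : Module.Basis (Fin N) ℂ (Fin N → ℂ), ∀ i, ∃ μ : ℂ,
    (M.map Complex.ofReal) *ᵥ (b i) = μ • (b i)

/-- Cyclic product of `d` of the matrices `M_j, M_{j+1}, …` (indices mod `m`),
with `M_j` applied first (i.e. `M_{j+d-1} ⋯ M_{j+1} M_j`). -/
def cycProd {N m : ℕ} (M : Fin m → Matrix (Fin N) (Fin N) ℝ) (j : Fin m) (d : ℕ) :
    Matrix (Fin N) (Fin N) ℝ :=
  (List.range d).foldl
    (fun A i => M ⟨(j.val + i) % m, Nat.mod_lt _ (lt_of_le_of_lt (Nat.zero_le _) j.isLt)⟩ * A) 1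

/-- The full return matrix `M^{(j)} = M_{j-1}⋯M_{j+1}M_j` (all `m` matrices in cyclic
order, `M_j` applied first). -/
def Mfull {N m : ℕ} (M : Fin m → Matrix (Fin N) (Fin N) ℝ) (j : Fin m) :
    Matrix (Fin N) (Fin N) ℝ :=
  cycProd M j m

/-- The partial-turn matrix `M_{(l,j)} = M_l ⋯ M_j` in cyclic order (`M_j` applied
first, wrapping around if `l < j`); for `l = j` it is just `M_j`. -/
def Mpartial {N m : ℕ} (M : Fin m → Matrix (Fin N) (Fin N) ℝ) (l j : Fin m) :
    Matrix (Fin N) (Fin N) ℝ :=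
  cycProd M j ((l.val + m - j.val) % m + 1)

/-- The cyclic successor `q + 1 (mod m)` of an index `q`. -/
def finSucc {m : ℕ} (q : Fin m) : Fin m :=
  ⟨(q.val + 1) % m, Nat.mod_lt _ (lt_of_le_of_lt (Nat.zero_le _) q.isLt)⟩

/-- `𝒰_S^{(j)}`: the `S`-local basin of attraction of `-∞` for the collection of
transition matrices, i.e. points all of whose partial-turn iterates have all
coordinates below `S` and tend to `-∞`. -/
def calU {N m : ℕ} (M : Fin m → Matrix (Fin N) (Fin N) ℝ) (j : Fin m) (S : ℝ) :
    Set (Fin N → ℝ) :=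
  {y | (∀ l : Fin m, ∀ k : ℕ, ∀ i,
          ((Mpartial M l j * (Mfull M j) ^ k) *ᵥ y) i < S) ∧
       (∀ l : Fin m, ∀ i,
          Tendsto (fun k : ℕ => ((Mpartial M l j * (Mfull M j) ^ k) *ᵥ y) i) atTop atBot)}

section CyclicProduct

variable {N m : ℕ}

def cycShift (j : Fin m) (d : ℕ) : Fin m :=
  ⟨(j.val + d) % m, Nat.mod_lt _ (lt_of_le_of_lt (Nat.zero_le _) j.isLt)⟩

theorem cycShift_cycShift (j : Fin m) (d e : ℕ) :
    cycShift (cycShift j d) e = cycShift j (d + e) :=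
  Fin.ext <| by simp only [cycShift, Nat.mod_add_mod, Nat.add_assoc]

theorem cycShift_mul_self (j : Fin m) (k : ℕ) : cycShift j (k * m) = j :=
  Fin.ext <| by simp only [cycShift, Nat.add_mul_mod_self_right, Nat.mod_eq_of_lt j.isLt]

theorem cycShift_partialLength (l j : Fin m) :
    cycShift j ((l.val + m - j.val) % m + 1) = finSucc l := by
  refine Fin.ext ?_
  simp only [cycShift, finSucc]
  calc (j.val + ((l.val + m - j.val) % m + 1)) % m
      = ((l.val + m - j.val) % m + (j.val + 1)) % m := by congr 1; ring
    _ = (l.val + 1 + m) % m := by rw [Nat.mod_add_mod]; congr 1; omega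
    _ = (l.val + 1) % m := Nat.add_mod_right _ _

theorem finSucc_surjective : Function.Surjective (finSucc : Fin m → Fin m) := by
  intro q
  have hm : 0 < m := q.pos
  refine ⟨⟨(q.val + m - 1) % m, Nat.mod_lt _ hm⟩, Fin.ext ?_⟩
  simp only [finSucc, Nat.mod_add_mod]
  rw [show q.val + m - 1 + 1 = q.val + m by omega, Nat.add_mod_right, Nat.mod_eq_of_lt q.isLt]

variable (M : Fin m → Matrix (Fin N) (Fin N) ℝ)

theorem cycProd_succ (j : Fin m) (d : ℕ) :
    cycProd M j (d + 1) = M (cycShift j d) * cycProd M j d := by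
  simp [cycProd, cycShift, List.range_succ]

theorem cycProd_add (j : Fin m) (d e : ℕ) :
    cycProd M j (d + e) = cycProd M (cycShift j d) e * cycProd M j d := by
  induction e with
  | zero => simp [cycProd]
  | succ e ih =>
    rw [← Nat.add_assoc, cycProd_succ, cycProd_succ, ih, cycShift_cycShift, Matrix.mul_assoc]

theorem cycProd_mul_self (j : Fin m) (k : ℕ) : cycProd M j (k * m) = Mfull M j ^ k := by
  induction k with
  | zero => simp [cycProd]
  | succ k ih =>
    rw [Nat.succ_mul, cycProd_add, ih, cycShift_mul_self, pow_succ']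
    rfl

theorem Mfull_pow_mul_cycProd (j : Fin m) (d k : ℕ) :
    Mfull M (cycShift j d) ^ k * cycProd M j d = cycProd M j d * Mfull M j ^ k := by
  calc Mfull M (cycShift j d) ^ k * cycProd M j d = cycProd M j (d + k * m) := by
        rw [cycProd_add, cycProd_mul_self]
    _ = cycProd M j (k * m + d) := by rw [Nat.add_comm]
    _ = cycProd M j d * Mfull M j ^ k := by
        rw [cycProd_add, cycShift_mul_self, cycProd_mul_self]

theorem Mfull_pow_mul_Mpartial (l j : Fin m) (k : ℕ) :
    Mfull M (finSucc l) ^ k * Mpartial M l j = Mpartial M l j * Mfull M j ^ k := by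
  rw [← cycShift_partialLength l j]
  exact Mfull_pow_mul_cycProd M j _ k

theorem isUnit_cycProd (hM : ∀ q, IsUnit (M q)) (j : Fin m) (d : ℕ) :
    IsUnit (cycProd M j d) := by
  induction d with
  | zero => simp [cycProd]
  | succ d ih => rw [cycProd_succ]; exact (hM _).mul ih

end CyclicProduct

theorem mulVec_mem_UnegInf {N : ℕ} {A B C : Matrix (Fin N) (Fin N) ℝ}
    (hAB : ∀ k : ℕ, C ^ k * A = A * B ^ k) {y : Fin N → ℝ} (hneg : ∀ i, (A *ᵥ y) i < 0)
    (htend : ∀ i, Tendsto (fun k : ℕ => ((A * B ^ k) *ᵥ y) i) atTop atBot) :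
    A *ᵥ y ∈ UnegInf C :=
  ⟨hneg, fun i => (htend i).congr fun k => by rw [mulVec_mulVec, hAB]⟩

theorem addHaar_preimage_mulVec_eq_zero {N : ℕ} (μ : Measure (Fin N → ℝ)) [μ.IsAddHaarMeasure]
    {A : Matrix (Fin N) (Fin N) ℝ} (hA : IsUnit A) {s : Set (Fin N → ℝ)} (hs : μ s = 0) :
    μ ((A *ᵥ ·) ⁻¹' s) = 0 := by
  have hdet : LinearMap.det (toLin' A) ≠ 0 := by
    rw [LinearMap.det_toLin']
    exact ((isUnit_iff_isUnit_det A).mp hA).ne_zero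
  have h := Measure.addHaar_preimage_linearMap μ hdet s
  rw [hs, mul_zero] at h
  exact h

theorem calU_subset_preimage_UnegInf {N m : ℕ} (M : Fin m → Matrix (Fin N) (Fin N) ℝ)
    (l j : Fin m) {S : ℝ} (hS : S ≤ 0) :
    calU M j S ⊆ (Mpartial M l j *ᵥ ·) ⁻¹' UnegInf (Mfull M (finSucc l)) := by
  rintro y ⟨hlt, htend⟩
  refine mulVec_mem_UnegInf (Mfull_pow_mul_Mpartial M l j) (fun i => ?_) (htend l)
  simpa using (hlt l 0 i).trans_le hS

theorem stmt5_general {N m : ℕ}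
    (M : Fin m → Matrix (Fin N) (Fin N) ℝ)
    (hinv : ∀ q, IsUnit (M q))
    (j₀ : Fin m) (h0 : volume (UnegInf (Mfull M j₀)) = 0) :
    ∀ j : Fin m, ∀ S : ℝ, S < 0 → volume (calU M j S) = 0 := by
  intro j S hS
  obtain ⟨l, rfl⟩ := finSucc_surjective j₀
  exact measure_mono_null (calU_subset_preimage_UnegInf M l j hS.le)
    (addHaar_preimage_mulVec_eq_zero volume (isUnit_cycProd M hinv j _) h0)

/-- Lemma 3.8: under the spectral hypotheses on the full return matrix, if
`U^{-∞}(M^{(j₀)})` has zero Lebesgue measure for some `j₀`, then every `𝒰_S^{(j)}`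
has zero Lebesgue measure. -/
theorem stmt5 {N m : ℕ} (hm : 1 ≤ m) (hN : 1 ≤ N)
    (M : Fin m → Matrix (Fin N) (Fin N) ℝ)
    (hinv : ∀ q, IsUnit (M q))
    (hdiag : DiagonalizableOverC (Mfull M ⟨0, hm⟩))
    (lamc : ℂ)
    (hsimple : Polynomial.rootMultiplicity lamc
      ((Mfull M ⟨0, hm⟩).map Complex.ofReal).charpoly = 1)
    (hmod : ‖lamc‖ ≠ 1)
    (hdom : ∀ μ : ℂ, IsCEigenvalue (Mfull M ⟨0, hm⟩) μ → μ ≠ lamc →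
      ‖μ‖ < ‖lamc‖)
    (j₀ : Fin m) (h0 : volume (UnegInf (Mfull M j₀)) = 0) :
    ∀ j : Fin m, ∀ S : ℝ, S < 0 → volume (calU M j S) = 0 :=
  stmt5_general M hinv j₀ h0
end
end

section
/- Let N ≥ 1 and let M be a real N×N matrix that is diagonalizable over ℂ, with a real eigenvalue λ > 1 that is algebraically simple and strictly dominant (|μ| < λ for every complex eigenvalue μ ≠ λ). Let w ∈ ℝ^N be a right eigenvector (M w = λ w) with all components strictly positive, and let v ∈ ℝ^N be a left eigenvector (Mᵀ v = λ v) normalized so that ⟨v, w⟩ > 0. Then { y ∈ ℝ^N : y_i < 0 for every i and ⟨v, y⟩ < 0 } ⊆ U^{-∞}(M) ⊆ { y ∈ ℝ^N : y_i < 0 for every i and ⟨v, y⟩ ≤ 0 }. -/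
open Matrix MeasureTheory Filter Set

noncomputable section

/-!
Expand `y` in a complex eigenbasis of `M`. Since every eigenvalue other than `λ` has modulus
`< λ` and `λ` is simple, `λ⁻ᵏ Mᵏ y` converges to the component of `y` along the `λ`-eigenvector.
That limit is `(⟨v, y⟩ / ⟨v, w⟩) w`: it is `w` itself for `y = w`, and `⟨v, λ⁻ᵏ Mᵏ y⟩ = ⟨v, y⟩`
for every `k` because `v` is a left eigenvector. So `(Mᵏ y)ᵢ ~ λᵏ ⟨v, y⟩ wᵢ / ⟨v, w⟩`, which tends
to `-∞` when `⟨v, y⟩ < 0` and cannot tend to `-∞` when `⟨v, y⟩ > 0`.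
-/

open Polynomial Topology

theorem Module.End.pow_apply_of_apply_eq_smul {R M : Type*} [CommSemiring R] [AddCommMonoid M]
    [Module R M] {f : Module.End R M} {μ : R} {x : M} (h : f x = μ • x) (k : ℕ) :
    (f ^ k) x = μ ^ k • x := by
  induction k with
  | zero => simp
  | succ k ih => rw [pow_succ', Module.End.mul_apply, ih, map_smul, h, smul_smul, pow_succ]

theorem Matrix.pow_mulVec_of_mulVec_eq_smul {R n : Type*} [CommSemiring R] [Fintype n]
    [DecidableEq n] {A : Matrix n n R} {μ : R} {x : n → R} (h : A *ᵥ x = μ • x) (k : ℕ) :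
    A ^ k *ᵥ x = μ ^ k • x := by
  rw [← Matrix.toLin'_apply, Matrix.toLin'_pow]
  exact Module.End.pow_apply_of_apply_eq_smul (by rwa [Matrix.toLin'_apply]) k

theorem Module.Basis.tendsto_inv_pow_smul_pow_apply {𝕜 E ι : Type*} [NormedField 𝕜]
    [AddCommGroup E] [Module 𝕜 E] [TopologicalSpace E] [ContinuousAdd E] [ContinuousSMul 𝕜 E]
    [Fintype ι] (b : Module.Basis ι 𝕜 E) {f : Module.End 𝕜 E} {μ : ι → 𝕜}
    (hb : ∀ i, f (b i) = μ i • b i) {i₀ : ι} (hμ₀ : μ i₀ ≠ 0)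
    (hdom : ∀ i ≠ i₀, ‖μ i‖ < ‖μ i₀‖) (x : E) :
    Tendsto (fun k : ℕ => (μ i₀ ^ k)⁻¹ • (f ^ k) x) atTop (𝓝 (b.repr x i₀ • b i₀)) := by
  classical
  have hratio : ∀ i, Tendsto (fun k : ℕ => (μ i / μ i₀) ^ k) atTop
      (𝓝 (if i = i₀ then 1 else 0)) := by
    intro i
    split_ifs with hi
    · simp [hi, div_self hμ₀]
    · refine tendsto_pow_atTop_nhds_zero_of_norm_lt_one ?_
      rw [norm_div, div_lt_one (norm_pos_iff.2 hμ₀)]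
      exact hdom i hi
  have hexpand : ∀ k : ℕ,
      (μ i₀ ^ k)⁻¹ • (f ^ k) x = ∑ i, ((μ i / μ i₀) ^ k * b.repr x i) • b i := by
    intro k
    conv_lhs => rw [← b.sum_repr x]
    simp only [map_sum, map_smul, Module.End.pow_apply_of_apply_eq_smul (hb _), Finset.smul_sum,
      smul_smul, div_eq_mul_inv]
    refine Finset.sum_congr rfl fun i _ => congrArg (· • b i) ?_
    rw [mul_pow, inv_pow]
    ring
  have hsum := tendsto_finsetSum Finset.univ fun i _ =>
    ((hratio i).mul_const (b.repr x i)).smul_const (b i)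
  simpa [hexpand, ite_mul, ite_smul, Finset.sum_ite_eq'] using hsum

theorem Matrix.dotProduct_pow_mulVec_of_transpose_mulVec_eq_smul {R n : Type*} [CommSemiring R]
    [Fintype n] [DecidableEq n] {A : Matrix n n R} {μ : R} {v : n → R} (h : Aᵀ *ᵥ v = μ • v)
    (k : ℕ) (x : n → R) : v ⬝ᵥ (A ^ k *ᵥ x) = μ ^ k * (v ⬝ᵥ x) := by
  rw [dotProduct_mulVec, ← mulVec_transpose, transpose_pow,
    Matrix.pow_mulVec_of_mulVec_eq_smul h, smul_dotProduct, smul_eq_mul]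

theorem Matrix.tendsto_inv_pow_smul_pow_mulVec {𝕜 n ι : Type*} [NormedField 𝕜] [Fintype n]
    [DecidableEq n] [Fintype ι] {A : Matrix n n 𝕜} (b : Module.Basis ι 𝕜 (n → 𝕜)) {μ : ι → 𝕜}
    (hb : ∀ i, A *ᵥ b i = μ i • b i) {i₀ : ι} (hμ₀ : μ i₀ ≠ 0)
    (hdom : ∀ i ≠ i₀, ‖μ i‖ < ‖μ i₀‖) {v w : n → 𝕜} (hw : A *ᵥ w = μ i₀ • w)
    (hv : Aᵀ *ᵥ v = μ i₀ • v) (hvw : v ⬝ᵥ w ≠ 0) (x : n → 𝕜) :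
    Tendsto (fun k : ℕ => (μ i₀ ^ k)⁻¹ • (A ^ k *ᵥ x)) atTop (𝓝 ((v ⬝ᵥ x / v ⬝ᵥ w) • w)) := by
  have hlim : ∀ x, Tendsto (fun k : ℕ => (μ i₀ ^ k)⁻¹ • (A ^ k *ᵥ x)) atTop
      (𝓝 (b.repr x i₀ • b i₀)) := by
    intro x
    simpa only [← Matrix.toLin'_apply, Matrix.toLin'_pow] using
      b.tendsto_inv_pow_smul_pow_apply (f := A.toLin') (by simpa using hb) hμ₀ hdom x
  have hμk : ∀ k : ℕ, (μ i₀ ^ k)⁻¹ * μ i₀ ^ k = 1 := fun k =>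
    inv_mul_cancel₀ (pow_ne_zero k hμ₀)
  have hw_eq : b.repr w i₀ • b i₀ = w := by
    refine tendsto_nhds_unique (hlim w) (tendsto_const_nhds.congr fun k => ?_)
    rw [Matrix.pow_mulVec_of_mulVec_eq_smul hw, smul_smul, hμk, one_smul]
  have hv_eq : v ⬝ᵥ (b.repr x i₀ • b i₀) = v ⬝ᵥ x := by
    refine tendsto_nhds_unique (((continuous_const.dotProduct continuous_id).tendsto _).comp
      (hlim x)) (tendsto_const_nhds.congr fun k => ?_)
    rw [Function.comp_apply, id, dotProduct_smul,
      Matrix.dotProduct_pow_mulVec_of_transpose_mulVec_eq_smul hv, smul_eq_mul, ← mul_assoc,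
      hμk, one_mul]
  have hrw : b.repr w i₀ ≠ 0 := by
    rintro h
    rw [← hw_eq, h, zero_smul, dotProduct_zero] at hvw
    exact hvw rfl
  have hLx : b.repr x i₀ • b i₀ = (b.repr x i₀ / b.repr w i₀) • w := by
    conv_rhs => arg 2; rw [← hw_eq]
    rw [smul_smul, div_mul_cancel₀ _ hrw]
  have hcoef : b.repr x i₀ / b.repr w i₀ = v ⬝ᵥ x / v ⬝ᵥ w := by
    rw [eq_div_iff hvw, ← smul_eq_mul, ← dotProduct_smul, ← hLx, hv_eq]
  rw [← hcoef, ← hLx]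
  exact hlim x

theorem Matrix.charpoly_eq_prod_X_sub_C_of_eigenbasis {R n ι : Type*} [CommRing R] [Fintype n]
    [DecidableEq n] [Fintype ι] [DecidableEq ι] {A : Matrix n n R}
    (b : Module.Basis ι R (n → R)) {μ : ι → R} (hb : ∀ i, A *ᵥ b i = μ i • b i) :
    A.charpoly = ∏ i, (X - C (μ i)) := by
  have hdiag : LinearMap.toMatrix b b A.toLin' = diagonal μ := by
    ext i j
    rcases eq_or_ne i j with rfl | hij
    · simp [LinearMap.toMatrix_apply, hb]
    · simp [LinearMap.toMatrix_apply, hb, hij]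
  rw [← Matrix.charpoly_toLin', ← LinearMap.charpoly_toMatrix _ b, hdiag, charpoly_diagonal]

theorem Polynomial.rootMultiplicity_prod_X_sub_C {R ι : Type*} [CommRing R] [IsDomain R]
    [DecidableEq R] [Fintype ι] (μ : ι → R) (a : R) :
    rootMultiplicity a (∏ i, (X - C (μ i))) = (Finset.univ.filter (μ · = a)).card := by
  have hprod : ∏ i, (X - C (μ i)) = ((Finset.univ.val.map μ).map (X - C ·)).prod := by
    rw [Multiset.map_map]
    rfl
  rw [← count_roots, hprod, roots_multiset_prod_X_sub_C, Multiset.count_map]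
  simp only [eq_comm]
  rfl

theorem Matrix.map_ofReal_mulVec {m n : Type*} [Fintype n] (A : Matrix m n ℝ) (x : n → ℝ) :
    A.map Complex.ofReal *ᵥ (Complex.ofReal ∘ x) = Complex.ofReal ∘ (A *ᵥ x) :=
  funext fun i => (RingHom.map_mulVec Complex.ofRealHom A x i).symm

theorem Matrix.map_ofReal_pow {n : Type*} [Fintype n] [DecidableEq n] (A : Matrix n n ℝ)
    (k : ℕ) :
    (A ^ k).map Complex.ofReal = A.map Complex.ofReal ^ k :=
  A.map_pow Complex.ofRealHom k

theorem Matrix.tendsto_inv_pow_smul_pow_mulVec_of_complex_eigenbasis {n ι : Type*} [Fintype n]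
    [DecidableEq n] [Fintype ι] {M : Matrix n n ℝ} (b : Module.Basis ι ℂ (n → ℂ)) {μ : ι → ℂ}
    (hb : ∀ i, M.map Complex.ofReal *ᵥ b i = μ i • b i) {i₀ : ι} {lam : ℝ} (hμ₀ : μ i₀ = lam)
    (hlam : lam ≠ 0) (hdom : ∀ i ≠ i₀, ‖μ i‖ < |lam|) {v w : n → ℝ} (hw : M *ᵥ w = lam • w)
    (hv : Mᵀ *ᵥ v = lam • v) (hvw : v ⬝ᵥ w ≠ 0) (y : n → ℝ) :
    Tendsto (fun k : ℕ => (lam ^ k)⁻¹ • (M ^ k *ᵥ y)) atTop (𝓝 ((v ⬝ᵥ y / v ⬝ᵥ w) • w)) := by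
  have hsmul : ∀ (c : ℝ) (x : n → ℝ),
      Complex.ofReal ∘ (c • x) = (c : ℂ) • (Complex.ofReal ∘ x) :=
    fun c x => funext fun i => by simp
  have hdot : ∀ x : n → ℝ, (Complex.ofReal ∘ v) ⬝ᵥ (Complex.ofReal ∘ x) = ((v ⬝ᵥ x : ℝ) : ℂ) :=
    fun x => (RingHom.map_dotProduct Complex.ofRealHom v x).symm
  have hC := Matrix.tendsto_inv_pow_smul_pow_mulVec b hb (hμ₀ ▸ Complex.ofReal_ne_zero.2 hlam)
    (by simpa [hμ₀] using hdom) (w := Complex.ofReal ∘ w) (v := Complex.ofReal ∘ v)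
    (by rw [hμ₀, Matrix.map_ofReal_mulVec, hw, hsmul])
    (by rw [hμ₀, ← transpose_map, Matrix.map_ofReal_mulVec, hv, hsmul])
    (by rw [hdot]; exact_mod_cast hvw) (Complex.ofReal ∘ y)
  have hseq : ∀ k : ℕ, (μ i₀ ^ k)⁻¹ • (M.map Complex.ofReal ^ k *ᵥ (Complex.ofReal ∘ y)) =
      Complex.ofReal ∘ ((lam ^ k)⁻¹ • (M ^ k *ᵥ y)) := fun k => by
    rw [hμ₀, ← Matrix.map_ofReal_pow, Matrix.map_ofReal_mulVec, hsmul, Complex.ofReal_inv,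
      Complex.ofReal_pow]
  rw [funext hseq, hdot, hdot, ← Complex.ofReal_div, ← hsmul] at hC
  have hre : Continuous fun z : n → ℂ => fun i => (z i).re :=
    continuous_pi fun i => Complex.continuous_re.comp (continuous_apply i)
  simpa only [Function.comp_def, Complex.ofReal_re] using (hre.tendsto _).comp hC

theorem Filter.Tendsto.atBot_of_inv_pow_mul_tendsto_neg {a : ℕ → ℝ} {r ℓ : ℝ} (hr : 1 < r)
    (h : Tendsto (fun k : ℕ => (r ^ k)⁻¹ * a k) atTop (𝓝 ℓ)) (hℓ : ℓ < 0) :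
    Tendsto a atTop atBot :=
  ((tendsto_pow_atTop_atTop_of_one_lt hr).atTop_mul_neg hℓ h).congr fun k =>
    mul_inv_cancel_left₀ (pow_pos (zero_lt_one.trans hr) k).ne' (a k)

theorem Filter.Tendsto.nonpos_of_inv_pow_mul_tendsto {a : ℕ → ℝ} {r ℓ : ℝ} (hr : 0 < r)
    (ha : Tendsto a atTop atBot) (h : Tendsto (fun k : ℕ => (r ^ k)⁻¹ * a k) atTop (𝓝 ℓ)) :
    ℓ ≤ 0 :=
  le_of_tendsto h <| (ha.eventually (eventually_le_atBot 0)).mono fun k hk =>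
    mul_nonpos_of_nonneg_of_nonpos (by positivity) hk

theorem stmt14_general {N : ℕ} (M : Matrix (Fin N) (Fin N) ℝ)
    (hdiag : DiagonalizableOverC M)
    (lam : ℝ) (hlam : 1 < lam)
    (hsimple : Polynomial.rootMultiplicity (lam : ℂ) (M.map Complex.ofReal).charpoly = 1)
    (hdom : ∀ μ : ℂ, IsCEigenvalue M μ → μ ≠ (lam : ℂ) → ‖μ‖ < lam)
    (w : Fin N → ℝ) (hw : M *ᵥ w = lam • w) (hwpos : ∀ i, 0 < w i)
    (v : Fin N → ℝ) (hv : Mᵀ *ᵥ v = lam • v) (hvw : 0 < v ⬝ᵥ w) :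
    {y : Fin N → ℝ | (∀ i, y i < 0) ∧ v ⬝ᵥ y < 0} ⊆ UnegInf M ∧
    UnegInf M ⊆ {y : Fin N → ℝ | (∀ i, y i < 0) ∧ v ⬝ᵥ y ≤ 0} := by
  classical
  obtain ⟨b, hb⟩ := hdiag
  choose μ hμ using hb
  rw [Matrix.charpoly_eq_prod_X_sub_C_of_eigenbasis b hμ,
    Polynomial.rootMultiplicity_prod_X_sub_C, Finset.card_eq_one] at hsimple
  obtain ⟨i₀, hi₀⟩ := hsimple
  have hμ_eq : ∀ i, μ i = lam ↔ i = i₀ := by simpa [Finset.ext_iff] using hi₀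
  have hdom' : ∀ i ≠ i₀, ‖μ i‖ < |lam| := fun i hi =>
    (abs_of_pos (zero_lt_one.trans hlam)).symm ▸
      hdom (μ i) ⟨b i, b.ne_zero i, hμ i⟩ fun h => hi ((hμ_eq i).1 h)
  have hlim : ∀ y i, Tendsto (fun k : ℕ => (lam ^ k)⁻¹ * (M ^ k *ᵥ y) i) atTop
      (𝓝 (v ⬝ᵥ y / v ⬝ᵥ w * w i)) := fun y =>
    tendsto_pi_nhds.1 (Matrix.tendsto_inv_pow_smul_pow_mulVec_of_complex_eigenbasis b hμ
      ((hμ_eq i₀).2 rfl) (by linarith) hdom' hw hv hvw.ne' y)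
  refine ⟨fun y ⟨hneg, hvy⟩ => ⟨hneg, fun i => (hlim y i).atBot_of_inv_pow_mul_tendsto_neg hlam
    (mul_neg_of_neg_of_pos (div_neg_of_neg_of_pos hvy hvw) (hwpos i))⟩,
    fun y ⟨hneg, htend⟩ => ⟨hneg, ?_⟩⟩
  obtain ⟨i, -, -⟩ := Finset.exists_ne_zero_of_sum_ne_zero hvw.ne'
  have hlim_nonpos := (htend i).nonpos_of_inv_pow_mul_tendsto (by linarith) (hlim y i)
  by_contra! hvy
  exact hlim_nonpos.not_gt (mul_pos (div_pos hvy hvw) (hwpos i))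

/-- Characterization of `U^{-∞}(M)` up to a boundary set: with a simple strictly
dominant real eigenvalue `λ > 1`, a positive right eigenvector `w` and a left
eigenvector `v` with `⟨v, w⟩ > 0`, the set `U^{-∞}(M)` is squeezed between
`{y ∈ ℝ^N₋ : ⟨v, y⟩ < 0}` and `{y ∈ ℝ^N₋ : ⟨v, y⟩ ≤ 0}`. -/
theorem stmt14 {N : ℕ} (hN : 1 ≤ N) (M : Matrix (Fin N) (Fin N) ℝ)
    (hdiag : DiagonalizableOverC M)
    (lam : ℝ) (hlam : 1 < lam)
    (hsimple : Polynomial.rootMultiplicity (lam : ℂ) (M.map Complex.ofReal).charpoly = 1)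
    (hdom : ∀ μ : ℂ, IsCEigenvalue M μ → μ ≠ (lam : ℂ) → ‖μ‖ < lam)
    (w : Fin N → ℝ) (hw : M *ᵥ w = lam • w) (hwpos : ∀ i, 0 < w i)
    (v : Fin N → ℝ) (hv : Mᵀ *ᵥ v = lam • v) (hvw : 0 < v ⬝ᵥ w) :
    {y : Fin N → ℝ | (∀ i, y i < 0) ∧ v ⬝ᵥ y < 0} ⊆ UnegInf M ∧
    UnegInf M ⊆ {y : Fin N → ℝ | (∀ i, y i < 0) ∧ v ⬝ᵥ y ≤ 0} :=
  stmt14_general M hdiag lam hlam hsimple hdom w hw hwpos v hv hvw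
end
end
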